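/- arXiv:2511.02196 — 2 statements merged into one kernel-verified Lean document; each statement's English description precedes it below -/
import Mathlib

section
/- Reachability matrix update correctness: if R is the reachability relation of DAG G and G' is the reduction of G at v, then the reachability relation of G' restricted to V \ {v} equals R restricted to V \ {v}; equivalently, setting R'(u,w) = R(u,w) for u, w ≠ v correctly computes reachability in G'. -/
/-!
A path of `E` between two vertices other than `v` visits `v` only in blocks `p → v → ⋯ → v → c`
with `p, c ≠ v`, and each such block is the single bypass edge `p → c` of the reduction.
-/

/-- Reduction of graph `E` at node `v`: delete `v`, add bypass edges from
in-neighbors of `v` to out-neighbors of `v`. -/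
def Reduced {V : Type*} (E : V → V → Prop) (v : V) : V → V → Prop :=
  fun a b => (a ≠ v ∧ b ≠ v ∧ E a b) ∨ (E a v ∧ E v b)

namespace Reduced

open Relation

variable {V : Type*} {E : V → V → Prop} {v : V}

theorem le_reflTransGen : Reduced E v ≤ ReflTransGen E := by
  rintro a b (⟨-, -, hab⟩ | ⟨hav, hvb⟩)
  · exact .single hab
  · exact .tail (.single hav) hvb

theorem reflTransGen_reduced_le : ReflTransGen (Reduced E v) ≤ ReflTransGen E :=
  reflTransGen_closed le_reflTransGen

/-- The invariant of a backward induction along an `E`-path: `p` is the last vertex other than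
`v` seen so far, and the path has just left `p` or is inside a block of visits to `v`. -/
theorem reflTransGen_reduced_of_reflTransGen {x b : V} (hb : b ≠ v) (h : ReflTransGen E x b) :
    ∀ p, p ≠ v → (x = p ∨ x = v ∧ E p v) → ReflTransGen (Reduced E v) p b := by
  induction h using ReflTransGen.head_induction_on with
  | refl =>
    rintro p - (rfl | ⟨rfl, -⟩)
    · exact .refl
    · exact absurd rfl hb
  | @head x c hxc _ ih =>
    rintro p hp hx
    by_cases hc : c = v
    · subst hc
      have hpc : E p c := by rcases hx with rfl | ⟨rfl, hpx⟩ <;> assumption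
      exact ih p hp (.inr ⟨rfl, hpc⟩)
    · have hstep : Reduced E v p c := by
        rcases hx with rfl | ⟨rfl, hpx⟩
        · exact .inl ⟨hp, hc, hxc⟩
        · exact .inr ⟨hpx, hxc⟩
      exact .head hstep (ih c hc (.inl rfl))

end Reduced

theorem reachability_matrix_update_correct_general {V : Type*} (E : V → V → Prop) (v : V) :
    ∀ a b : V, a ≠ v → b ≠ v →
      (Relation.ReflTransGen (Reduced E v) a b ↔ Relation.ReflTransGen E a b) :=
  fun a b ha hb =>
    ⟨fun h => Reduced.reflTransGen_reduced_le a b h,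
      fun h => Reduced.reflTransGen_reduced_of_reflTransGen hb h a ha (.inl rfl)⟩

theorem reachability_matrix_update_correct {V : Type*} [Fintype V] (E : V → V → Prop)
    (hacyc : ∀ x, ¬ Relation.TransGen E x x) (v : V) :
    ∀ a b : V, a ≠ v → b ≠ v →
      (Relation.ReflTransGen (Reduced E v) a b ↔ Relation.ReflTransGen E a b) :=
  reachability_matrix_update_correct_general E v
end

section
/- No new redundant edges: in pattern reduction, if the bypass edge (u, w) is added only when w is not already reachable from u in G \ {v} via other paths, the resulting graph G' has the same reachability relation as the full reduction and contains no edge (a,b) for which there is an alternative a-to-b path avoiding that edge created in the same step. -/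
/-- The graph `E` with node `v` removed. -/
def RemovedRel {V : Type*} (E : V → V → Prop) (v : V) : V → V → Prop :=
  fun a b => a ≠ v ∧ b ≠ v ∧ E a b

/-- Restricted reduction at `v`: the bypass edge `(u, w)` is added only when `w` is
not already reachable from `u` in `G` with `v` removed. -/
def ReducedRestricted {V : Type*} (E : V → V → Prop) (v : V) : V → V → Prop :=
  fun a b => (a ≠ v ∧ b ≠ v ∧ E a b) ∨
    (E a v ∧ E v b ∧ ¬ Relation.ReflTransGen (RemovedRel E v) a b)

/-! A bypass edge omitted by the restricted reduction is witnessed by a path in `G` with `v`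
removed, and every edge of that path survives both reductions. -/

open Relation

section

variable {V : Type*} {E : V → V → Prop} {v : V} {a b : V}

theorem ReducedRestricted.reduced (h : ReducedRestricted E v a b) : Reduced E v a b :=
  h.imp id fun ⟨hav, hvb, _⟩ => ⟨hav, hvb⟩

theorem RemovedRel.reducedRestricted (h : RemovedRel E v a b) : ReducedRestricted E v a b :=
  Or.inl h

theorem Reduced.reflTransGen_reducedRestricted (h : Reduced E v a b) :
    ReflTransGen (ReducedRestricted E v) a b := by
  rcases h with hkept | ⟨hav, hvb⟩
  · exact .single (Or.inl hkept)
  · by_cases hpath : ReflTransGen (RemovedRel E v) a b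
    · exact ReflTransGen.mono (fun _ _ => RemovedRel.reducedRestricted) _ _ hpath
    · exact .single (Or.inr ⟨hav, hvb, hpath⟩)

theorem reflTransGen_reducedRestricted_iff :
    ReflTransGen (ReducedRestricted E v) a b ↔ ReflTransGen (Reduced E v) a b :=
  ⟨ReflTransGen.mono (fun _ _ => ReducedRestricted.reduced) _ _,
    reflTransGen_closed (fun _ _ => Reduced.reflTransGen_reducedRestricted) _ _⟩

end

theorem restricted_reduction_same_reachability_general {V : Type*} (E : V → V → Prop)
    (v : V) :
    ∀ a b : V, a ≠ v → b ≠ v →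
      (Relation.ReflTransGen (ReducedRestricted E v) a b ↔
        Relation.ReflTransGen (Reduced E v) a b) :=
  fun _ _ _ _ => reflTransGen_reducedRestricted_iff

theorem restricted_reduction_same_reachability {V : Type*} [Fintype V] (E : V → V → Prop)
    (hacyc : ∀ x, ¬ Relation.TransGen E x x) (v : V) :
    ∀ a b : V, a ≠ v → b ≠ v →
      (Relation.ReflTransGen (ReducedRestricted E v) a b ↔
        Relation.ReflTransGen (Reduced E v) a b) :=
  restricted_reduction_same_reachability_general E v
end
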